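/- arXiv:quant-ph/0309111 — 6 statements merged into one kernel-verified Lean document; each statement's English description precedes it below -/
import Mathlib

section
/- Let (Θ, F, π) be a probability space, C₁, C₂ > 0, and let f₁, g₁, g₂ : Θ → ℝ be measurable with |f₁| ≤ C₁, |g₁| ≤ C₂, |g₂| ≤ C₂ pointwise. Then for any real coefficients γ₁, γ₂ with |γ₁| ≤ 1 and |γ₂| ≤ 1: |γ₁ ∫ f₁·g₁ dπ + γ₂ ∫ f₁·g₂ dπ| ≤ C₁·C₂ + γ₁·γ₂·(C₁/C₂)·∫ g₁·g₂ dπ. -/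
/-! Pointwise, `|γ₁ g₁ + γ₂ g₂|` is bounded by `C₂ + γ₁ γ₂ g₁ g₂ / C₂`, since both
`(C₂ + γ₁ g₁)(C₂ + γ₂ g₂)` and `(C₂ - γ₁ g₁)(C₂ - γ₂ g₂)` are nonnegative. Multiplying by
`|f₁| ≤ C₁` and integrating against `π` gives the lemma. -/

open MeasureTheory

theorem abs_add_le_add_mul_div_of_abs_le {x y c : ℝ} (hc : 0 < c) (hx : |x| ≤ c) (hy : |y| ≤ c) :
    |x + y| ≤ c + x * y / c := by
  rw [abs_le] at hx hy
  have hprod : x * y / c * c = x * y := div_mul_cancel₀ _ hc.ne'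
  rw [abs_le]
  constructor
  · nlinarith [mul_nonneg (neg_le_iff_add_nonneg'.mp hx.1) (neg_le_iff_add_nonneg'.mp hy.1)]
  · nlinarith [mul_nonneg (sub_nonneg.mpr hx.2) (sub_nonneg.mpr hy.2)]

theorem abs_mul_le_of_abs_le_one {γ x c : ℝ} (hγ : |γ| ≤ 1) (hx : |x| ≤ c) : |γ * x| ≤ c := by
  rw [abs_mul]
  exact (mul_le_of_le_one_left (abs_nonneg x) hγ).trans hx

theorem abs_mul_add_le_of_abs_le {f x y γ₁ γ₂ a c : ℝ} (hc : 0 < c) (hf : |f| ≤ a)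
    (hx : |x| ≤ c) (hy : |y| ≤ c) (hγ₁ : |γ₁| ≤ 1) (hγ₂ : |γ₂| ≤ 1) :
    |f * (γ₁ * x + γ₂ * y)| ≤ a * c + γ₁ * γ₂ * (a / c) * (x * y) := by
  have hsum : |γ₁ * x + γ₂ * y| ≤ c + γ₁ * x * (γ₂ * y) / c :=
    abs_add_le_add_mul_div_of_abs_le hc (abs_mul_le_of_abs_le_one hγ₁ hx)
      (abs_mul_le_of_abs_le_one hγ₂ hy)
  calc |f * (γ₁ * x + γ₂ * y)| ≤ a * (c + γ₁ * x * (γ₂ * y) / c) := by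
        rw [abs_mul]
        exact mul_le_mul hf hsum (abs_nonneg _) ((abs_nonneg f).trans hf)
    _ = a * c + γ₁ * γ₂ * (a / c) * (x * y) := by ring

theorem integrable_mul_of_abs_le {Θ : Type*} [MeasurableSpace Θ] {π : Measure Θ}
    [IsFiniteMeasure π] {f g : Θ → ℝ} {a b : ℝ} (hfm : Measurable f) (hgm : Measurable g)
    (hf : ∀ θ, |f θ| ≤ a) (hg : ∀ θ, |g θ| ≤ b) : Integrable (fun θ => f θ * g θ) π :=
  .of_bound (hfm.mul hgm).aestronglyMeasurable (a * b) <| ae_of_all _ fun θ => by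
    rw [Real.norm_eq_abs, abs_mul]
    exact mul_le_mul (hf θ) (hg θ) (abs_nonneg _) ((abs_nonneg _).trans (hf θ))

theorem loubenets_lemma1_general {Θ : Type*} [MeasurableSpace Θ]
    (π : Measure Θ) [IsProbabilityMeasure π]
    (C₁ C₂ : ℝ) (hC₂ : 0 < C₂)
    (f₁ g₁ g₂ : Θ → ℝ)
    (hf₁m : Measurable f₁) (hg₁m : Measurable g₁) (hg₂m : Measurable g₂)
    (hf₁ : ∀ θ, |f₁ θ| ≤ C₁) (hg₁ : ∀ θ, |g₁ θ| ≤ C₂) (hg₂ : ∀ θ, |g₂ θ| ≤ C₂)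
    (γ₁ γ₂ : ℝ) (hγ₁ : |γ₁| ≤ 1) (hγ₂ : |γ₂| ≤ 1) :
    |γ₁ * ∫ θ, f₁ θ * g₁ θ ∂π + γ₂ * ∫ θ, f₁ θ * g₂ θ ∂π| ≤
      C₁ * C₂ + γ₁ * γ₂ * (C₁ / C₂) * ∫ θ, g₁ θ * g₂ θ ∂π := by
  have hfg₁ := integrable_mul_of_abs_le (π := π) hf₁m hg₁m hf₁ hg₁
  have hfg₂ := integrable_mul_of_abs_le (π := π) hf₁m hg₂m hf₁ hg₂
  have hgg := integrable_mul_of_abs_le (π := π) hg₁m hg₂m hg₁ hg₂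
  have hlhs : γ₁ * ∫ θ, f₁ θ * g₁ θ ∂π + γ₂ * ∫ θ, f₁ θ * g₂ θ ∂π =
      ∫ θ, f₁ θ * (γ₁ * g₁ θ + γ₂ * g₂ θ) ∂π := by
    rw [← integral_const_mul, ← integral_const_mul,
      ← integral_add (hfg₁.const_mul γ₁) (hfg₂.const_mul γ₂)]
    congr 1 with θ
    ring
  have hrhs : C₁ * C₂ + γ₁ * γ₂ * (C₁ / C₂) * ∫ θ, g₁ θ * g₂ θ ∂π =
      ∫ θ, (C₁ * C₂ + γ₁ * γ₂ * (C₁ / C₂) * (g₁ θ * g₂ θ)) ∂π := by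
    rw [integral_add (integrable_const _) (hgg.const_mul _), integral_const, integral_const_mul,
      probReal_univ, one_smul]
  have hbound : Integrable (fun θ => C₁ * C₂ + γ₁ * γ₂ * (C₁ / C₂) * (g₁ θ * g₂ θ)) π :=
    (integrable_const _).add (hgg.const_mul _)
  rw [hlhs, hrhs]
  exact norm_integral_le_of_norm_le hbound <|
    ae_of_all _ fun θ => (Real.norm_eq_abs _).trans_le <|
      abs_mul_add_le_of_abs_le hC₂ (hf₁ θ) (hg₁ θ) (hg₂ θ) hγ₁ hγ₂

theorem loubenets_lemma1 {Θ : Type*} [MeasurableSpace Θ]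
    (π : Measure Θ) [IsProbabilityMeasure π]
    (C₁ C₂ : ℝ) (hC₁ : 0 < C₁) (hC₂ : 0 < C₂)
    (f₁ g₁ g₂ : Θ → ℝ)
    (hf₁m : Measurable f₁) (hg₁m : Measurable g₁) (hg₂m : Measurable g₂)
    (hf₁ : ∀ θ, |f₁ θ| ≤ C₁) (hg₁ : ∀ θ, |g₁ θ| ≤ C₂) (hg₂ : ∀ θ, |g₂ θ| ≤ C₂)
    (γ₁ γ₂ : ℝ) (hγ₁ : |γ₁| ≤ 1) (hγ₂ : |γ₂| ≤ 1) :
    |γ₁ * ∫ θ, f₁ θ * g₁ θ ∂π + γ₂ * ∫ θ, f₁ θ * g₂ θ ∂π| ≤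
      C₁ * C₂ + γ₁ * γ₂ * (C₁ / C₂) * ∫ θ, g₁ θ * g₂ θ ∂π :=
  loubenets_lemma1_general π C₁ C₂ hC₂ f₁ g₁ g₂ hf₁m hg₁m hg₂m hf₁ hg₁ hg₂ γ₁ γ₂ hγ₁ hγ₂
end

section
/- Let (Θ, F, π) be a probability space and f₁ᵃ, g₁, g₂ : Θ → ℝ be measurable functions bounded in absolute value by 1. If moreover there is a measurable function f₁ᵇ¹ with |f₁ᵇ¹| ≤ 1 and g₁ = f₁ᵇ¹ π-almost everywhere (or g₁ = -f₁ᵇ¹ π-a.e.), then |∫ f₁ᵃ·g₁ dπ - ∫ f₁ᵃ·g₂ dπ| ≤ 1 ∓ ∫ f₁ᵇ¹·g₂ dπ (with minus sign for g₁ = f₁ᵇ¹ a.e. and plus sign for g₁ = -f₁ᵇ¹ a.e.). -/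
/-! Pointwise, `|a x - a y| ≤ |x - y| ≤ 1 - x y` for `a, x, y ∈ [-1, 1]`; integrating this gives
Bell's inequality `|∫ f g₁ - ∫ f g₂| ≤ 1 - ∫ g₁ g₂`. The correlation condition `g₁ = ±f₁ᵇ¹` a.e.
turns `∫ g₁ g₂` into `±∫ f₁ᵇ¹ g₂`. -/

open MeasureTheory

lemma abs_sub_le_one_sub_mul {x y : ℝ} (hx : |x| ≤ 1) (hy : |y| ≤ 1) : |x - y| ≤ 1 - x * y := by
  obtain ⟨hx₁, hx₂⟩ := abs_le.mp hx
  obtain ⟨hy₁, hy₂⟩ := abs_le.mp hy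
  rw [abs_le]
  constructor <;> nlinarith

lemma abs_mul_sub_mul_le_one_sub_mul {a x y : ℝ} (ha : |a| ≤ 1) (hx : |x| ≤ 1) (hy : |y| ≤ 1) :
    |a * x - a * y| ≤ 1 - x * y :=
  calc |a * x - a * y| = |a| * |x - y| := by rw [← mul_sub, abs_mul]
    _ ≤ 1 * |x - y| := by gcongr
    _ = |x - y| := one_mul _
    _ ≤ 1 - x * y := abs_sub_le_one_sub_mul hx hy

section

variable {Θ : Type*} [MeasurableSpace Θ] {μ : Measure Θ}

lemma integrable_mul_of_abs_le_one [IsFiniteMeasure μ] {u v : Θ → ℝ}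
    (hu : AEStronglyMeasurable u μ) (hv : AEStronglyMeasurable v μ)
    (hu₁ : ∀ᵐ θ ∂μ, |u θ| ≤ 1) (hv₁ : ∀ᵐ θ ∂μ, |v θ| ≤ 1) :
    Integrable (fun θ => u θ * v θ) μ :=
  Integrable.of_bound (hu.mul hv) 1 <| by
    filter_upwards [hu₁, hv₁] with θ hu₁ hv₁
    rw [Real.norm_eq_abs, abs_mul]
    nlinarith [abs_nonneg (u θ), abs_nonneg (v θ)]

theorem abs_integral_mul_sub_integral_mul_le [IsProbabilityMeasure μ] {f g₁ g₂ : Θ → ℝ}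
    (hf : AEStronglyMeasurable f μ) (hg₁ : AEStronglyMeasurable g₁ μ)
    (hg₂ : AEStronglyMeasurable g₂ μ) (hf₁ : ∀ᵐ θ ∂μ, |f θ| ≤ 1)
    (hg₁₁ : ∀ᵐ θ ∂μ, |g₁ θ| ≤ 1) (hg₂₁ : ∀ᵐ θ ∂μ, |g₂ θ| ≤ 1) :
    |(∫ θ, f θ * g₁ θ ∂μ) - ∫ θ, f θ * g₂ θ ∂μ| ≤ 1 - ∫ θ, g₁ θ * g₂ θ ∂μ := by
  have hfg₁ := integrable_mul_of_abs_le_one hf hg₁ hf₁ hg₁₁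
  have hfg₂ := integrable_mul_of_abs_le_one hf hg₂ hf₁ hg₂₁
  have hg₁g₂ := integrable_mul_of_abs_le_one hg₁ hg₂ hg₁₁ hg₂₁
  calc |(∫ θ, f θ * g₁ θ ∂μ) - ∫ θ, f θ * g₂ θ ∂μ|
      = |∫ θ, f θ * g₁ θ - f θ * g₂ θ ∂μ| := by rw [integral_sub hfg₁ hfg₂]
    _ ≤ ∫ θ, |f θ * g₁ θ - f θ * g₂ θ| ∂μ := abs_integral_le_integral_abs
    _ ≤ ∫ θ, 1 - g₁ θ * g₂ θ ∂μ := by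
        refine integral_mono_ae (hfg₁.sub hfg₂).abs ((integrable_const 1).sub hg₁g₂) ?_
        filter_upwards [hf₁, hg₁₁, hg₂₁] with θ using abs_mul_sub_mul_le_one_sub_mul
    _ = 1 - ∫ θ, g₁ θ * g₂ θ ∂μ := by simp [integral_sub (integrable_const 1) hg₁g₂]

end

theorem bell_inequality_product_general {Θ : Type*} [MeasurableSpace Θ]
    (π : Measure Θ) [IsProbabilityMeasure π]
    (f₁a g₁ g₂ f₁b₁ : Θ → ℝ)
    (hf₁am : Measurable f₁a) (hg₁m : Measurable g₁) (hg₂m : Measurable g₂)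
    (hf₁a : ∀ θ, |f₁a θ| ≤ 1) (hg₁ : ∀ θ, |g₁ θ| ≤ 1) (hg₂ : ∀ θ, |g₂ θ| ≤ 1) :
    ((g₁ =ᵐ[π] f₁b₁) →
      |(∫ θ, f₁a θ * g₁ θ ∂π) - ∫ θ, f₁a θ * g₂ θ ∂π| ≤
        1 - ∫ θ, f₁b₁ θ * g₂ θ ∂π) ∧
    ((g₁ =ᵐ[π] fun θ => -f₁b₁ θ) →
      |(∫ θ, f₁a θ * g₁ θ ∂π) - ∫ θ, f₁a θ * g₂ θ ∂π| ≤
        1 + ∫ θ, f₁b₁ θ * g₂ θ ∂π) := by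
  have bell := abs_integral_mul_sub_integral_mul_le (μ := π) hf₁am.aestronglyMeasurable
    hg₁m.aestronglyMeasurable hg₂m.aestronglyMeasurable (.of_forall hf₁a) (.of_forall hg₁)
    (.of_forall hg₂)
  constructor
  · intro hcorr
    have : ∫ θ, g₁ θ * g₂ θ ∂π = ∫ θ, f₁b₁ θ * g₂ θ ∂π :=
      integral_congr_ae (hcorr.mul (.refl _ g₂))
    rwa [this] at bell
  · intro hanticorr
    have : ∫ θ, g₁ θ * g₂ θ ∂π = -∫ θ, f₁b₁ θ * g₂ θ ∂π := by
      rw [← integral_neg]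
      refine integral_congr_ae ((hanticorr.mul (.refl _ g₂)).trans (.of_forall fun θ => ?_))
      exact neg_mul _ _
    rwa [this, sub_neg_eq_add] at bell

theorem bell_inequality_product {Θ : Type*} [MeasurableSpace Θ]
    (π : Measure Θ) [IsProbabilityMeasure π]
    (f₁a g₁ g₂ f₁b₁ : Θ → ℝ)
    (hf₁am : Measurable f₁a) (hg₁m : Measurable g₁) (hg₂m : Measurable g₂)
    (hf₁b₁m : Measurable f₁b₁)
    (hf₁a : ∀ θ, |f₁a θ| ≤ 1) (hg₁ : ∀ θ, |g₁ θ| ≤ 1) (hg₂ : ∀ θ, |g₂ θ| ≤ 1)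
    (hf₁b₁ : ∀ θ, |f₁b₁ θ| ≤ 1) :
    ((g₁ =ᵐ[π] f₁b₁) →
      |(∫ θ, f₁a θ * g₁ θ ∂π) - ∫ θ, f₁a θ * g₂ θ ∂π| ≤
        1 - ∫ θ, f₁b₁ θ * g₂ θ ∂π) ∧
    ((g₁ =ᵐ[π] fun θ => -f₁b₁ θ) →
      |(∫ θ, f₁a θ * g₁ θ ∂π) - ∫ θ, f₁a θ * g₂ θ ∂π| ≤
        1 + ∫ θ, f₁b₁ θ * g₂ θ ∂π) :=
  bell_inequality_product_general π f₁a g₁ g₂ f₁b₁ hf₁am hg₁m hg₂m hf₁a hg₁ hg₂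
end

section
/- Let (Θ, F, π) be a probability space and let f₁, f₂, g₁, g₂ : Θ → ℝ be measurable functions bounded in absolute value by 1. Let γ₁₁, γ₁₂, γ₂₁, γ₂₂ be real numbers with |γ_{km}| ≤ 1 for all k,m and γ₁₁γ₁₂ = -γ₂₁γ₂₂. Then |γ₁₁ ∫ f₁g₁ dπ + γ₁₂ ∫ f₁g₂ dπ + γ₂₁ ∫ f₂g₁ dπ + γ₂₂ ∫ f₂g₂ dπ| ≤ 2. -/
open MeasureTheory

lemma abs_add_le_one_add_mul {a b : ℝ} (ha : |a| ≤ 1) (hb : |b| ≤ 1) :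
    |a + b| ≤ 1 + a * b := by
  rw [abs_le] at *
  constructor <;> nlinarith [ha.1, ha.2, hb.1, hb.2]

theorem extended_CHSH_product {Θ : Type*} [MeasurableSpace Θ]
    (π : Measure Θ) [IsProbabilityMeasure π]
    (f₁ f₂ g₁ g₂ : Θ → ℝ)
    (hf₁m : Measurable f₁) (hf₂m : Measurable f₂)
    (hg₁m : Measurable g₁) (hg₂m : Measurable g₂)
    (hf₁ : ∀ θ, |f₁ θ| ≤ 1) (hf₂ : ∀ θ, |f₂ θ| ≤ 1)
    (hg₁ : ∀ θ, |g₁ θ| ≤ 1) (hg₂ : ∀ θ, |g₂ θ| ≤ 1)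
    (γ₁₁ γ₁₂ γ₂₁ γ₂₂ : ℝ)
    (h₁₁ : |γ₁₁| ≤ 1) (h₁₂ : |γ₁₂| ≤ 1) (h₂₁ : |γ₂₁| ≤ 1) (h₂₂ : |γ₂₂| ≤ 1)
    (hγ : γ₁₁ * γ₁₂ = -(γ₂₁ * γ₂₂)) :
    |γ₁₁ * ∫ θ, f₁ θ * g₁ θ ∂π + γ₁₂ * ∫ θ, f₁ θ * g₂ θ ∂π +
      γ₂₁ * ∫ θ, f₂ θ * g₁ θ ∂π + γ₂₂ * ∫ θ, f₂ θ * g₂ θ ∂π| ≤ 2 := by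
  -- pointwise bound
  have key : ∀ θ, |γ₁₁ * (f₁ θ * g₁ θ) + γ₁₂ * (f₁ θ * g₂ θ) +
      γ₂₁ * (f₂ θ * g₁ θ) + γ₂₂ * (f₂ θ * g₂ θ)| ≤ 2 := by
    intro θ
    have ha : |γ₁₁ * g₁ θ| ≤ 1 := by
      rw [abs_mul]; exact mul_le_one₀ h₁₁ (abs_nonneg _) (hg₁ θ)
    have hb : |γ₁₂ * g₂ θ| ≤ 1 := by
      rw [abs_mul]; exact mul_le_one₀ h₁₂ (abs_nonneg _) (hg₂ θ)
    have hc : |γ₂₁ * g₁ θ| ≤ 1 := by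
      rw [abs_mul]; exact mul_le_one₀ h₂₁ (abs_nonneg _) (hg₁ θ)
    have hd : |γ₂₂ * g₂ θ| ≤ 1 := by
      rw [abs_mul]; exact mul_le_one₀ h₂₂ (abs_nonneg _) (hg₂ θ)
    have h1 := abs_add_le_one_add_mul ha hb
    have h2 := abs_add_le_one_add_mul hc hd
    have e : γ₁₁ * (f₁ θ * g₁ θ) + γ₁₂ * (f₁ θ * g₂ θ) +
        γ₂₁ * (f₂ θ * g₁ θ) + γ₂₂ * (f₂ θ * g₂ θ) =
        f₁ θ * (γ₁₁ * g₁ θ + γ₁₂ * g₂ θ) + f₂ θ * (γ₂₁ * g₁ θ + γ₂₂ * g₂ θ) := by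
      ring
    rw [e]
    calc |f₁ θ * (γ₁₁ * g₁ θ + γ₁₂ * g₂ θ) + f₂ θ * (γ₂₁ * g₁ θ + γ₂₂ * g₂ θ)|
        ≤ |f₁ θ| * |γ₁₁ * g₁ θ + γ₁₂ * g₂ θ| + |f₂ θ| * |γ₂₁ * g₁ θ + γ₂₂ * g₂ θ| := by
          rw [← abs_mul, ← abs_mul]; exact abs_add_le _ _
      _ ≤ 1 * |γ₁₁ * g₁ θ + γ₁₂ * g₂ θ| + 1 * |γ₂₁ * g₁ θ + γ₂₂ * g₂ θ| := by
          gcongr <;> [exact hf₁ θ; exact hf₂ θ]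
      _ = |γ₁₁ * g₁ θ + γ₁₂ * g₂ θ| + |γ₂₁ * g₁ θ + γ₂₂ * g₂ θ| := by ring
      _ ≤ (1 + γ₁₁ * g₁ θ * (γ₁₂ * g₂ θ)) + (1 + γ₂₁ * g₁ θ * (γ₂₂ * g₂ θ)) := by
          gcongr
      _ = 2 + (γ₁₁ * γ₁₂ + γ₂₁ * γ₂₂) * (g₁ θ * g₂ θ) := by ring
      _ = 2 := by rw [hγ]; ring
  -- integrability
  have integ : ∀ (u v : Θ → ℝ), Measurable u → Measurable v → (∀ θ, |u θ| ≤ 1) →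
      (∀ θ, |v θ| ≤ 1) → Integrable (fun θ => u θ * v θ) π := by
    intro u v hu hv hbu hbv
    refine Integrable.mono' (integrable_const 1) ((hu.mul hv).aestronglyMeasurable) ?_
    filter_upwards with θ
    rw [Real.norm_eq_abs, abs_mul]
    exact mul_le_one₀ (hbu θ) (abs_nonneg _) (hbv θ)
  have i11 := integ f₁ g₁ hf₁m hg₁m hf₁ hg₁
  have i12 := integ f₁ g₂ hf₁m hg₂m hf₁ hg₂
  have i21 := integ f₂ g₁ hf₂m hg₁m hf₂ hg₁
  have i22 := integ f₂ g₂ hf₂m hg₂m hf₂ hg₂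
  have e : γ₁₁ * ∫ θ, f₁ θ * g₁ θ ∂π + γ₁₂ * ∫ θ, f₁ θ * g₂ θ ∂π +
      γ₂₁ * ∫ θ, f₂ θ * g₁ θ ∂π + γ₂₂ * ∫ θ, f₂ θ * g₂ θ ∂π =
      ∫ θ, (γ₁₁ * (f₁ θ * g₁ θ) + γ₁₂ * (f₁ θ * g₂ θ) +
        γ₂₁ * (f₂ θ * g₁ θ) + γ₂₂ * (f₂ θ * g₂ θ)) ∂π := by
    have iA : Integrable (fun θ => γ₁₁ * (f₁ θ * g₁ θ) + γ₁₂ * (f₁ θ * g₂ θ)) π :=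
      (i11.const_mul γ₁₁).add (i12.const_mul γ₁₂)
    have iB : Integrable
        (fun θ => γ₁₁ * (f₁ θ * g₁ θ) + γ₁₂ * (f₁ θ * g₂ θ) + γ₂₁ * (f₂ θ * g₁ θ)) π :=
      iA.add (i21.const_mul γ₂₁)
    have A := integral_add (μ := π) (i11.const_mul γ₁₁) (i12.const_mul γ₁₂)
    have B := integral_add (μ := π) iA (i21.const_mul γ₂₁)
    have C := integral_add (μ := π) iB (i22.const_mul γ₂₂)
    rw [C, B, A, integral_const_mul, integral_const_mul, integral_const_mul, integral_const_mul]
  rw [e]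
  have := norm_integral_le_of_norm_le_const (μ := π)
    (f := fun θ => γ₁₁ * (f₁ θ * g₁ θ) + γ₁₂ * (f₁ θ * g₂ θ) +
        γ₂₁ * (f₂ θ * g₁ θ) + γ₂₂ * (f₂ θ * g₂ θ)) (C := 2)
    (ae_of_all _ fun θ => by rw [Real.norm_eq_abs]; exact key θ)
  simpa using this
end

section
/- Let (Θ, F, π) be a probability space and let f₁, f₂, g₁, g₂ : Θ → ℝ be measurable functions bounded in absolute value by 1. Then |∫ f₁g₁ dπ + ∫ f₁g₂ dπ + ∫ f₂g₁ dπ - ∫ f₂g₂ dπ| ≤ 2. -/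
/-! Pointwise, `f₁ g₁ + f₁ g₂ + f₂ g₁ - f₂ g₂ = f₁ (g₁ + g₂) + f₂ (g₁ - g₂)`, and for `|g₁|, |g₂| ≤ 1`
one has `|g₁ + g₂| + |g₁ - g₂| = 2 max |g₁| |g₂| ≤ 2`; so the integrand is bounded by `2`, and so is
its integral against a probability measure. -/

open MeasureTheory

section Pointwise

variable {R : Type*} [CommRing R] [LinearOrder R] [IsStrictOrderedRing R]

lemma abs_add_add_abs_sub_le_two {b₁ b₂ : R} (hb₁ : |b₁| ≤ 1) (hb₂ : |b₂| ≤ 1) :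
    |b₁ + b₂| + |b₁ - b₂| ≤ 2 := by
  obtain ⟨hb₁l, hb₁u⟩ := abs_le.mp hb₁
  obtain ⟨hb₂l, hb₂u⟩ := abs_le.mp hb₂
  rcases abs_cases (b₁ + b₂) with ⟨hp, -⟩ | ⟨hp, -⟩ <;>
    rcases abs_cases (b₁ - b₂) with ⟨hm, -⟩ | ⟨hm, -⟩ <;> linarith

lemma abs_chsh_le_two {a₁ a₂ b₁ b₂ : R} (ha₁ : |a₁| ≤ 1) (ha₂ : |a₂| ≤ 1)
    (hb₁ : |b₁| ≤ 1) (hb₂ : |b₂| ≤ 1) :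
    |a₁ * b₁ + a₁ * b₂ + a₂ * b₁ - a₂ * b₂| ≤ 2 :=
  calc |a₁ * b₁ + a₁ * b₂ + a₂ * b₁ - a₂ * b₂|
      = |a₁ * (b₁ + b₂) + a₂ * (b₁ - b₂)| := by ring_nf
    _ ≤ |a₁| * |b₁ + b₂| + |a₂| * |b₁ - b₂| := by
      simpa only [abs_mul] using abs_add_le (a₁ * (b₁ + b₂)) (a₂ * (b₁ - b₂))
    _ ≤ 1 * |b₁ + b₂| + 1 * |b₁ - b₂| := by gcongr
    _ ≤ 2 := by simpa only [one_mul] using abs_add_add_abs_sub_le_two hb₁ hb₂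

end Pointwise

lemma MeasureTheory.Integrable.mul_of_abs_le_one {α : Type*} [MeasurableSpace α]
    {μ : Measure α} [IsFiniteMeasure μ] {u v : α → ℝ} (hu : Measurable u) (hv : Measurable v)
    (hu₁ : ∀ x, |u x| ≤ 1) (hv₁ : ∀ x, |v x| ≤ 1) :
    Integrable (fun x ↦ u x * v x) μ :=
  .of_bound (hu.mul hv).aestronglyMeasurable 1 <| ae_of_all _ fun x ↦ by
    simpa only [Real.norm_eq_abs, abs_mul] using mul_le_one₀ (hu₁ x) (abs_nonneg _) (hv₁ x)

lemma MeasureTheory.abs_integral_le_of_forall_abs_le {α : Type*} [MeasurableSpace α]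
    {μ : Measure α} [IsProbabilityMeasure μ] {F : α → ℝ} {C : ℝ} (h : ∀ x, |F x| ≤ C) :
    |∫ x, F x ∂μ| ≤ C := by
  simpa using norm_integral_le_of_norm_le_const (f := F) (μ := μ) (ae_of_all _ h)

theorem CHSH_inequality {Θ : Type*} [MeasurableSpace Θ]
    (π : Measure Θ) [IsProbabilityMeasure π]
    (f₁ f₂ g₁ g₂ : Θ → ℝ)
    (hf₁m : Measurable f₁) (hf₂m : Measurable f₂)
    (hg₁m : Measurable g₁) (hg₂m : Measurable g₂)
    (hf₁ : ∀ θ, |f₁ θ| ≤ 1) (hf₂ : ∀ θ, |f₂ θ| ≤ 1)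
    (hg₁ : ∀ θ, |g₁ θ| ≤ 1) (hg₂ : ∀ θ, |g₂ θ| ≤ 1) :
    |(∫ θ, f₁ θ * g₁ θ ∂π) + (∫ θ, f₁ θ * g₂ θ ∂π) +
      (∫ θ, f₂ θ * g₁ θ ∂π) - ∫ θ, f₂ θ * g₂ θ ∂π| ≤ 2 := by
  have h₁₁ := Integrable.mul_of_abs_le_one (μ := π) hf₁m hg₁m hf₁ hg₁
  have h₁₂ := Integrable.mul_of_abs_le_one (μ := π) hf₁m hg₂m hf₁ hg₂
  have h₂₁ := Integrable.mul_of_abs_le_one (μ := π) hf₂m hg₁m hf₂ hg₁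
  have h₂₂ := Integrable.mul_of_abs_le_one (μ := π) hf₂m hg₂m hf₂ hg₂
  calc _ = |∫ θ, (f₁ θ * g₁ θ + f₁ θ * g₂ θ + f₂ θ * g₁ θ - f₂ θ * g₂ θ) ∂π| := by
        rw [integral_sub, integral_add, integral_add]
        exacts [h₁₁, h₁₂, h₁₁.add h₁₂, h₂₁, (h₁₁.add h₁₂).add h₂₁, h₂₂]
    _ ≤ 2 := abs_integral_le_of_forall_abs_le fun θ ↦
        abs_chsh_le_two (hf₁ θ) (hf₂ θ) (hg₁ θ) (hg₂ θ)
end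

section
/- Let (Θ, F_Θ, π) and (Ω, F_Ω, ν) be probability spaces, and let f₁, f₂ : Θ × Ω → ℝ (first-party, settings a₁, a₂) and g₁, g₂ : Θ × Ω → ℝ (second-party, settings b₁, b₂) be measurable functions bounded in absolute value by 1. Define correlations E(k,m) = ∫∫ f_k(θ,ω) g_m(θ,ω) dν(ω) dπ(θ). Then for any real |γ_{km}| ≤ 1 with γ₁₁γ₁₂ = -γ₂₁γ₂₂, we have |Σ_{k,m} γ_{km} E(k,m)| ≤ 2. -/
/-!
Pointwise, the CHSH combination equals `x₁ (γ₁₁ y₁ + γ₁₂ y₂) + x₂ (γ₂₁ y₁ + γ₂₂ y₂)` with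
`xₖ = fₖ p`, `yₘ = gₘ p`, so it is at most `|γ₁₁ y₁ + γ₁₂ y₂| + |γ₂₁ y₁ + γ₂₂ y₂|`. This sum is the
larger of `|(γ₁₁ ± γ₂₁) y₁ + (γ₁₂ ± γ₂₂) y₂|`, and the constraint `γ₁₁ γ₁₂ + γ₂₁ γ₂₂ = 0` makes
`|γ₁₁ ± γ₂₁| + |γ₁₂ ± γ₂₂| ≤ 2`. By Fubini the iterated integrals are integrals over the
probability space `Θ × Ω`, where the pointwise bound `2` integrates to `2`.
-/

open MeasureTheory

lemma abs_add_abs_le_of_abs_add_le_of_abs_sub_le {x y C : ℝ} (hadd : |x + y| ≤ C)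
    (hsub : |x - y| ≤ C) : |x| + |y| ≤ C := by
  rw [abs_le] at hadd hsub
  rcases abs_cases x with ⟨hx, -⟩ | ⟨hx, -⟩ <;> rcases abs_cases y with ⟨hy, -⟩ | ⟨hy, -⟩ <;>
    linarith

lemma abs_mul_add_mul_le {s t u v : ℝ} (hu : |u| ≤ 1) (hv : |v| ≤ 1) :
    |s * u + t * v| ≤ |s| + |t| :=
  calc |s * u + t * v| ≤ |s| * |u| + |t| * |v| := by
        simpa only [abs_mul] using abs_add_le (s * u) (t * v)
    _ ≤ |s| + |t| := by
        gcongr <;> apply mul_le_of_le_one_right (abs_nonneg _) <;> assumption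

/- In each sign case `s (a + c) + t (b + d) ≤ 2` is the sum of `(1 - s a) (1 - t b) ≥ 0` and
`(1 - s c) (1 - t d) ≥ 0`, since `a b + c d = 0`. -/
lemma abs_add_add_abs_add_le_two {a b c d : ℝ} (ha : |a| ≤ 1) (hb : |b| ≤ 1) (hc : |c| ≤ 1)
    (hd : |d| ≤ 1) (h : a * b = -(c * d)) : |a + c| + |b + d| ≤ 2 := by
  rw [abs_le] at ha hb hc hd
  rcases abs_cases (a + c) with ⟨h₁, -⟩ | ⟨h₁, -⟩ <;>
    rcases abs_cases (b + d) with ⟨h₂, -⟩ | ⟨h₂, -⟩ <;> rw [h₁, h₂] <;> nlinarith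

lemma abs_add_abs_le_two_of_mul_eq_neg_mul {a b c d u v : ℝ} (ha : |a| ≤ 1) (hb : |b| ≤ 1)
    (hc : |c| ≤ 1) (hd : |d| ≤ 1) (h : a * b = -(c * d)) (hu : |u| ≤ 1) (hv : |v| ≤ 1) :
    |a * u + b * v| + |c * u + d * v| ≤ 2 := by
  have hc' : |-c| ≤ 1 := by rwa [abs_neg]
  have hd' : |-d| ≤ 1 := by rwa [abs_neg]
  apply abs_add_abs_le_of_abs_add_le_of_abs_sub_le
  · calc |a * u + b * v + (c * u + d * v)| = |(a + c) * u + (b + d) * v| := by ring_nf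
      _ ≤ |a + c| + |b + d| := abs_mul_add_mul_le hu hv
      _ ≤ 2 := abs_add_add_abs_add_le_two ha hb hc hd h
  · calc |a * u + b * v - (c * u + d * v)| = |(a + -c) * u + (b + -d) * v| := by ring_nf
      _ ≤ |a + -c| + |b + -d| := abs_mul_add_mul_le hu hv
      _ ≤ 2 := abs_add_add_abs_add_le_two ha hb hc' hd' (by rw [h]; ring)

lemma abs_chsh_le_two_s7 {γ₁₁ γ₁₂ γ₂₁ γ₂₂ x₁ x₂ y₁ y₂ : ℝ} (h₁₁ : |γ₁₁| ≤ 1) (h₁₂ : |γ₁₂| ≤ 1)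
    (h₂₁ : |γ₂₁| ≤ 1) (h₂₂ : |γ₂₂| ≤ 1) (hγ : γ₁₁ * γ₁₂ = -(γ₂₁ * γ₂₂))
    (hx₁ : |x₁| ≤ 1) (hx₂ : |x₂| ≤ 1) (hy₁ : |y₁| ≤ 1) (hy₂ : |y₂| ≤ 1) :
    |γ₁₁ * (x₁ * y₁) + γ₁₂ * (x₁ * y₂) + γ₂₁ * (x₂ * y₁) + γ₂₂ * (x₂ * y₂)| ≤ 2 :=
  calc _ = |(γ₁₁ * y₁ + γ₁₂ * y₂) * x₁ + (γ₂₁ * y₁ + γ₂₂ * y₂) * x₂| := by ring_nf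
    _ ≤ |γ₁₁ * y₁ + γ₁₂ * y₂| + |γ₂₁ * y₁ + γ₂₂ * y₂| := abs_mul_add_mul_le hx₁ hx₂
    _ ≤ 2 := abs_add_abs_le_two_of_mul_eq_neg_mul h₁₁ h₁₂ h₂₁ h₂₂ hγ hy₁ hy₂

section Integral

variable {α : Type*} [MeasurableSpace α] {μ : Measure α}

lemma integrable_mul_of_abs_le_one_s7 [IsFiniteMeasure μ] {f g : α → ℝ} (hf : Measurable f)
    (hg : Measurable g) (hf₁ : ∀ x, |f x| ≤ 1) (hg₁ : ∀ x, |g x| ≤ 1) :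
    Integrable (fun x ↦ f x * g x) μ :=
  .of_bound (hf.mul hg).aestronglyMeasurable 1 <| ae_of_all _ fun x ↦ by
    simpa only [Real.norm_eq_abs, abs_mul] using mul_le_one₀ (hf₁ x) (abs_nonneg _) (hg₁ x)

lemma integral_linear_combination_four {F₁ F₂ F₃ F₄ : α → ℝ} (h₁ : Integrable F₁ μ)
    (h₂ : Integrable F₂ μ) (h₃ : Integrable F₃ μ) (h₄ : Integrable F₄ μ) (c₁ c₂ c₃ c₄ : ℝ) :
    c₁ * ∫ x, F₁ x ∂μ + c₂ * ∫ x, F₂ x ∂μ + c₃ * ∫ x, F₃ x ∂μ + c₄ * ∫ x, F₄ x ∂μ =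
      ∫ x, c₁ * F₁ x + c₂ * F₂ x + c₃ * F₃ x + c₄ * F₄ x ∂μ := by
  rw [integral_add (by fun_prop) (by fun_prop), integral_add (by fun_prop) (by fun_prop),
    integral_add (by fun_prop) (by fun_prop)]
  simp only [integral_const_mul]

end Integral

theorem extended_CHSH_factorizable {Θ Ω : Type*} [MeasurableSpace Θ] [MeasurableSpace Ω]
    (π : Measure Θ) [IsProbabilityMeasure π]
    (ν : Measure Ω) [IsProbabilityMeasure ν]
    (f₁ f₂ g₁ g₂ : Θ × Ω → ℝ)
    (hf₁m : Measurable f₁) (hf₂m : Measurable f₂)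
    (hg₁m : Measurable g₁) (hg₂m : Measurable g₂)
    (hf₁ : ∀ p, |f₁ p| ≤ 1) (hf₂ : ∀ p, |f₂ p| ≤ 1)
    (hg₁ : ∀ p, |g₁ p| ≤ 1) (hg₂ : ∀ p, |g₂ p| ≤ 1)
    (γ₁₁ γ₁₂ γ₂₁ γ₂₂ : ℝ)
    (h₁₁ : |γ₁₁| ≤ 1) (h₁₂ : |γ₁₂| ≤ 1) (h₂₁ : |γ₂₁| ≤ 1) (h₂₂ : |γ₂₂| ≤ 1)
    (hγ : γ₁₁ * γ₁₂ = -(γ₂₁ * γ₂₂)) :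
    |γ₁₁ * (∫ θ, ∫ ω, f₁ (θ, ω) * g₁ (θ, ω) ∂ν ∂π) +
     γ₁₂ * (∫ θ, ∫ ω, f₁ (θ, ω) * g₂ (θ, ω) ∂ν ∂π) +
     γ₂₁ * (∫ θ, ∫ ω, f₂ (θ, ω) * g₁ (θ, ω) ∂ν ∂π) +
     γ₂₂ * (∫ θ, ∫ ω, f₂ (θ, ω) * g₂ (θ, ω) ∂ν ∂π)| ≤ 2 := by
  have i₁₁ := integrable_mul_of_abs_le_one_s7 (μ := π.prod ν) hf₁m hg₁m hf₁ hg₁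
  have i₁₂ := integrable_mul_of_abs_le_one_s7 (μ := π.prod ν) hf₁m hg₂m hf₁ hg₂
  have i₂₁ := integrable_mul_of_abs_le_one_s7 (μ := π.prod ν) hf₂m hg₁m hf₂ hg₁
  have i₂₂ := integrable_mul_of_abs_le_one_s7 (μ := π.prod ν) hf₂m hg₂m hf₂ hg₂
  rw [← integral_prod _ i₁₁, ← integral_prod _ i₁₂, ← integral_prod _ i₂₁, ← integral_prod _ i₂₂,
    integral_linear_combination_four i₁₁ i₁₂ i₂₁ i₂₂, ← Real.norm_eq_abs]
  calc _ ≤ 2 * (π.prod ν).real Set.univ := norm_integral_le_of_norm_le_const <| ae_of_all _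
          fun p ↦ abs_chsh_le_two_s7 h₁₁ h₁₂ h₂₁ h₂₂ hγ (hf₁ p) (hf₂ p) (hg₁ p) (hg₂ p)
    _ = 2 := by simp
end

section
/- Let H be a finite-dimensional complex Hilbert space, A, B₁, B₂ self-adjoint operators on H with operator norms ‖A‖ ≤ 1, ‖B₁‖ ≤ 1, ‖B₂‖ ≤ 1, and let ρ_S = Σⱼ γⱼ τⱼ ⊗ τⱼ be a density operator on H ⊗ H, where γⱼ > 0, Σⱼ γⱼ = 1 and each τⱼ is a density operator on H. Then |tr[ρ_S (A ⊗ B₁)] - tr[ρ_S (A ⊗ B₂)]| ≤ 1 - tr[ρ_S (B₁ ⊗ B₂)]. -/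
/-! For a product state the correlation factorises, tr[(τ ⊗ τ)(M ⊗ P)] = tr(τM) · tr(τP), and
tr(τP) is real when P is Hermitian. Writing a density matrix as τ = b bᴴ gives
tr(τX) = Σᵢ ⟨bᵢ, X bᵢ⟩ over the columns bᵢ of b, with Σᵢ ‖bᵢ‖² = tr τ = 1, so |tr(τX)| ≤ ‖X‖.
Hence ρ_S is a local hidden-variable model: the hidden variable j has law γ and the outcomes
aⱼ, bⱼ, cⱼ lie in [-1, 1]. Bell's inequality then follows pointwise from
|ab - ac| ≤ |b - c| ≤ 1 - bc, the last step being (1 - b)(1 + c) ≥ 0 and (1 + b)(1 - c) ≥ 0. -/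

open Matrix
open scoped ComplexOrder Kronecker

/-- The operator norm (ℓ²→ℓ² norm) of a square complex matrix. -/
noncomputable def opNorm {n : Type*} [Fintype n] [DecidableEq n] (A : Matrix n n ℂ) : ℝ :=
  ‖Matrix.toEuclideanCLM (𝕜 := ℂ) A‖

namespace Matrix

variable {n : Type*} [Fintype n]

lemma norm_sq_toLp_col {m : Type*} (b : Matrix n m ℂ) (i : m) :
    ‖WithLp.toLp 2 (fun k => b k i)‖ ^ 2 = ((bᴴ * b) i i).re := by
  rw [EuclideanSpace.norm_sq_eq, Matrix.mul_apply, Complex.re_sum]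
  refine Finset.sum_congr rfl fun k _ => ?_
  rw [conjTranspose_apply, Complex.star_def, Complex.conj_mul', ← Complex.ofReal_pow,
    Complex.ofReal_re]

lemma isSelfAdjoint_trace_mul {τ P : Matrix n n ℂ} (hτ : τ.IsHermitian) (hP : P.IsHermitian) :
    IsSelfAdjoint (τ * P).trace := by
  rw [IsSelfAdjoint, ← trace_conjTranspose, conjTranspose_mul, hτ.eq, hP.eq, trace_mul_comm]

lemma trace_sum_smul_kronecker_mul_kronecker {ι : Type*} [Fintype ι] (c : ι → ℂ)
    (σ τ : ι → Matrix n n ℂ) (M P : Matrix n n ℂ) :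
    ((∑ j, c j • (σ j ⊗ₖ τ j)) * (M ⊗ₖ P)).trace =
      ∑ j, c j * ((σ j * M).trace * (τ j * P).trace) := by
  simp only [Finset.sum_mul, trace_sum, smul_mul_assoc, ← mul_kronecker_mul, trace_smul,
    trace_kronecker, smul_eq_mul]

lemma re_trace_sum_smul_kronecker_mul_kronecker {ι : Type*} [Fintype ι] (γ : ι → ℝ)
    (τ : ι → Matrix n n ℂ) (hτ : ∀ j, (τ j).IsHermitian) (M : Matrix n n ℂ) {P : Matrix n n ℂ}
    (hP : P.IsHermitian) :
    ((∑ j, (γ j : ℂ) • (τ j ⊗ₖ τ j)) * (M ⊗ₖ P)).trace.re =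
      ∑ j, γ j * ((τ j * M).trace.re * (τ j * P).trace.re) := by
  rw [trace_sum_smul_kronecker_mul_kronecker, Complex.re_sum]
  refine Finset.sum_congr rfl fun j _ => ?_
  have hreal : (τ j * P).trace.im = 0 :=
    Complex.conj_eq_iff_im.mp (isSelfAdjoint_trace_mul (hτ j) hP)
  simp [Complex.mul_re, hreal]

variable [DecidableEq n]

lemma norm_star_dotProduct_mulVec_le (X : Matrix n n ℂ) (v : n → ℂ) :
    ‖star v ⬝ᵥ X *ᵥ v‖ ≤ opNorm X * ‖WithLp.toLp 2 v‖ ^ 2 := by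
  set w : EuclideanSpace ℂ n := WithLp.toLp 2 v
  have h : star v ⬝ᵥ X *ᵥ v = inner ℂ w (toEuclideanCLM (𝕜 := ℂ) X w) := by
    rw [toEuclideanCLM_toLp, EuclideanSpace.inner_toLp_toLp, dotProduct_comm]
  calc ‖star v ⬝ᵥ X *ᵥ v‖ ≤ ‖w‖ * ‖toEuclideanCLM (𝕜 := ℂ) X w‖ := h ▸ norm_inner_le_norm _ _
    _ ≤ ‖w‖ * (opNorm X * ‖w‖) := by gcongr; exact ContinuousLinearMap.le_opNorm _ _
    _ = opNorm X * ‖w‖ ^ 2 := by ring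

lemma norm_trace_conjTranspose_mul_mul_le {m : Type*} [Fintype m] (X : Matrix n n ℂ)
    (b : Matrix n m ℂ) :
    ‖(bᴴ * X * b).trace‖ ≤ opNorm X * (bᴴ * b).trace.re := by
  have hdiag : ∀ i, (bᴴ * X * b) i i = star (fun k => b k i) ⬝ᵥ X *ᵥ fun k => b k i := by
    intro i
    rw [Matrix.mul_assoc]
    simp only [Matrix.mul_apply, dotProduct, mulVec, conjTranspose_apply, Pi.star_apply]
  calc ‖(bᴴ * X * b).trace‖ ≤ ∑ i, ‖(bᴴ * X * b) i i‖ := norm_sum_le _ _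
    _ ≤ ∑ i, opNorm X * ((bᴴ * b) i i).re := by
      gcongr with i
      rw [hdiag, ← norm_sq_toLp_col]
      exact norm_star_dotProduct_mulVec_le X _
    _ = opNorm X * (bᴴ * b).trace.re := by
      rw [← Finset.mul_sum, trace, Complex.re_sum]
      rfl

open scoped MatrixOrder Matrix.Norms.L2Operator in
lemma PosSemidef.norm_trace_mul_le {τ : Matrix n n ℂ} (hτ : τ.PosSemidef) (X : Matrix n n ℂ) :
    ‖(τ * X).trace‖ ≤ opNorm X * τ.trace.re := by
  obtain ⟨b, rfl⟩ := CStarAlgebra.nonneg_iff_eq_mul_star_self.mp hτ.nonneg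
  rw [star_eq_conjTranspose, Matrix.mul_assoc, trace_mul_comm, trace_mul_comm b bᴴ]
  exact norm_trace_conjTranspose_mul_mul_le X b

end Matrix

lemma abs_mul_sub_mul_le_one_sub_mul_s13 {a b c : ℝ} (ha : |a| ≤ 1) (hb : |b| ≤ 1) (hc : |c| ≤ 1) :
    |a * b - a * c| ≤ 1 - b * c := by
  have hbc : |b - c| ≤ 1 - b * c := by
    rw [abs_le] at hb hc ⊢
    constructor <;> nlinarith [mul_nonneg (sub_nonneg.2 hb.2) (neg_le_iff_add_nonneg.1 hc.1),
      mul_nonneg (neg_le_iff_add_nonneg.1 hb.1) (sub_nonneg.2 hc.2)]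
  calc |a * b - a * c| = |a| * |b - c| := by rw [← mul_sub, abs_mul]
    _ ≤ 1 * (1 - b * c) := mul_le_mul ha hbc (abs_nonneg _) zero_le_one
    _ = 1 - b * c := one_mul _

lemma abs_sum_mul_sub_sum_mul_le {ι : Type*} (s : Finset ι) {w a b c : ι → ℝ}
    (hw : ∀ j ∈ s, 0 ≤ w j) (hw₁ : ∑ j ∈ s, w j = 1)
    (ha : ∀ j ∈ s, |a j| ≤ 1) (hb : ∀ j ∈ s, |b j| ≤ 1) (hc : ∀ j ∈ s, |c j| ≤ 1) :
    |∑ j ∈ s, w j * (a j * b j) - ∑ j ∈ s, w j * (a j * c j)| ≤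
      1 - ∑ j ∈ s, w j * (b j * c j) := by
  calc |∑ j ∈ s, w j * (a j * b j) - ∑ j ∈ s, w j * (a j * c j)|
      = |∑ j ∈ s, w j * (a j * b j - a j * c j)| := by
        simp only [mul_sub, Finset.sum_sub_distrib]
    _ ≤ ∑ j ∈ s, |w j * (a j * b j - a j * c j)| := Finset.abs_sum_le_sum_abs _ _
    _ ≤ ∑ j ∈ s, w j * (1 - b j * c j) := by
      refine Finset.sum_le_sum fun j hj => ?_
      rw [abs_mul, abs_of_nonneg (hw j hj)]
      exact mul_le_mul_of_nonneg_left
        (abs_mul_sub_mul_le_one_sub_mul_s13 (ha j hj) (hb j hj) (hc j hj)) (hw j hj)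
    _ = 1 - ∑ j ∈ s, w j * (b j * c j) := by
      simp only [mul_sub, mul_one, Finset.sum_sub_distrib, hw₁]

theorem bell_inequality_special_separable_general {n N : ℕ}
    (A B₁ B₂ : Matrix (Fin n) (Fin n) ℂ)
    (hB₁ : B₁.IsHermitian) (hB₂ : B₂.IsHermitian)
    (hAn : opNorm A ≤ 1) (hB₁n : opNorm B₁ ≤ 1) (hB₂n : opNorm B₂ ≤ 1)
    (γ : Fin N → ℝ) (hγpos : ∀ j, 0 < γ j) (hγsum : ∑ j, γ j = 1)
    (τ : Fin N → Matrix (Fin n) (Fin n) ℂ)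
    (hτ : ∀ j, (τ j).PosSemidef) (hτtr : ∀ j, (τ j).trace = 1)
    (ρS : Matrix (Fin n × Fin n) (Fin n × Fin n) ℂ)
    (hρS : ρS = ∑ j, (γ j : ℂ) • (τ j ⊗ₖ τ j)) :
    |((ρS * (A ⊗ₖ B₁)).trace).re - ((ρS * (A ⊗ₖ B₂)).trace).re| ≤
      1 - ((ρS * (B₁ ⊗ₖ B₂)).trace).re := by
  subst hρS
  have hτh : ∀ j, (τ j).IsHermitian := fun j => (hτ j).isHermitian
  have hexpect : ∀ {X}, opNorm X ≤ 1 → ∀ j ∈ Finset.univ, |((τ j * X).trace).re| ≤ 1 :=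
    fun {X} hX j _ =>
      calc |((τ j * X).trace).re| ≤ ‖(τ j * X).trace‖ := Complex.abs_re_le_norm _
        _ ≤ opNorm X * (τ j).trace.re := (hτ j).norm_trace_mul_le X
        _ ≤ 1 := by rwa [hτtr j, Complex.one_re, mul_one]
  rw [re_trace_sum_smul_kronecker_mul_kronecker γ τ hτh A hB₁,
    re_trace_sum_smul_kronecker_mul_kronecker γ τ hτh A hB₂,
    re_trace_sum_smul_kronecker_mul_kronecker γ τ hτh B₁ hB₂]
  exact abs_sum_mul_sub_sum_mul_le Finset.univ (fun j _ => (hγpos j).le) hγsum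
    (hexpect hAn) (hexpect hB₁n) (hexpect hB₂n)

theorem bell_inequality_special_separable {n N : ℕ}
    (A B₁ B₂ : Matrix (Fin n) (Fin n) ℂ)
    (hA : A.IsHermitian) (hB₁ : B₁.IsHermitian) (hB₂ : B₂.IsHermitian)
    (hAn : opNorm A ≤ 1) (hB₁n : opNorm B₁ ≤ 1) (hB₂n : opNorm B₂ ≤ 1)
    (γ : Fin N → ℝ) (hγpos : ∀ j, 0 < γ j) (hγsum : ∑ j, γ j = 1)
    (τ : Fin N → Matrix (Fin n) (Fin n) ℂ)
    (hτ : ∀ j, (τ j).PosSemidef) (hτtr : ∀ j, (τ j).trace = 1)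
    (ρS : Matrix (Fin n × Fin n) (Fin n × Fin n) ℂ)
    (hρS : ρS = ∑ j, (γ j : ℂ) • (τ j ⊗ₖ τ j)) :
    |((ρS * (A ⊗ₖ B₁)).trace).re - ((ρS * (A ⊗ₖ B₂)).trace).re| ≤
      1 - ((ρS * (B₁ ⊗ₖ B₂)).trace).re :=
  bell_inequality_special_separable_general A B₁ B₂ hB₁ hB₂ hAn hB₁n hB₂n γ hγpos hγsum τ hτ hτtr ρS
    hρS
end
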